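/- Let n ≥ 2 be an integer. On the n-qubit space, i.e., complex matrices indexed by (Fin n → Fin 2), the sum over all pairs 1 ≤ r < s ≤ n of the SWAP operators satisfies Σ_{r<s} SWAP_{r,s} = J² + ((n² − 4n)/4)·1, where J² = J_x² + J_y² + J_z² and J_w = (1/2)·Σ_{i=1}^n σ_w^{(i)} for w ∈ {x, y, z}. -/
import Mathlib


/-- The permutation operator `P(π)` on `n` qubits: `(P(π))_{x,y} = 1` if `x ∘ π = y`,
and `0` otherwise. In particular `permOp n (Equiv.swap r s)` is the SWAP operator on
qubits `r` and `s`. -/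
def permOp (n : ℕ) (π : Equiv.Perm (Fin n)) :
    Matrix (Fin n → Fin 2) (Fin n → Fin 2) ℂ :=
  fun x y => if x ∘ π = y then 1 else 0

/-- The single-site operator `B^{(i)}` acting as the `2 × 2` matrix `B` on qubit `i` and
as the identity elsewhere. -/
def siteOp (n : ℕ) (B : Matrix (Fin 2) (Fin 2) ℂ) (i : Fin n) :
    Matrix (Fin n → Fin 2) (Fin n → Fin 2) ℂ :=
  fun x y => B (x i) (y i) * ∏ l ∈ Finset.univ.erase i, (if x l = y l then 1 else 0)

/-- The Pauli matrix `σ_x`. -/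
def pauliX : Matrix (Fin 2) (Fin 2) ℂ := !![0, 1; 1, 0]

/-- The Pauli matrix `σ_y`. -/
noncomputable def pauliY : Matrix (Fin 2) (Fin 2) ℂ := !![0, -Complex.I; Complex.I, 0]

/-- The Pauli matrix `σ_z`. -/
def pauliZ : Matrix (Fin 2) (Fin 2) ℂ := !![1, 0; 0, -1]

/-- The total angular momentum component `J_w = (1/2) ∑ i, σ_w^{(i)}` on `n` qubits. -/
noncomputable def Jop (n : ℕ) (B : Matrix (Fin 2) (Fin 2) ℂ) :
    Matrix (Fin n → Fin 2) (Fin n → Fin 2) ℂ :=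
  (1 / 2 : ℂ) • ∑ i, siteOp n B i

/-- The squared total angular momentum `J² = J_x² + J_y² + J_z²` on `n` qubits. -/
noncomputable def Jsq (n : ℕ) : Matrix (Fin n → Fin 2) (Fin n → Fin 2) ℂ :=
  Jop n pauliX * Jop n pauliX + Jop n pauliY * Jop n pauliY + Jop n pauliZ * Jop n pauliZ

open Finset Matrix

/-- auxiliary tensor-product operator -/
noncomputable def tOp (n : ℕ) (f : Fin n → Matrix (Fin 2) (Fin 2) ℂ) :
    Matrix (Fin n → Fin 2) (Fin n → Fin 2) ℂ :=
  fun x y => ∏ l, f l (x l) (y l)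

lemma tOp_mul {n : ℕ} (f g : Fin n → Matrix (Fin 2) (Fin 2) ℂ) :
    tOp n f * tOp n g = tOp n (fun l => f l * g l) := by
  ext x y
  show ∑ z : Fin n → Fin 2, (∏ l, f l (x l) (z l)) * ∏ l, g l (z l) (y l)
      = ∏ l, (f l * g l) (x l) (y l)
  calc ∑ z : Fin n → Fin 2, (∏ l, f l (x l) (z l)) * ∏ l, g l (z l) (y l)
      = ∑ z : Fin n → Fin 2, ∏ l, (f l (x l) (z l) * g l (z l) (y l)) := by
        simp [Finset.prod_mul_distrib]
    _ = ∏ l, ∑ a, f l (x l) a * g l a (y l) :=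
        (Fintype.prod_sum (fun l a => f l (x l) a * g l a (y l))).symm
    _ = _ := by simp [Matrix.mul_apply]

lemma siteOp_eq_tOp {n : ℕ} (B : Matrix (Fin 2) (Fin 2) ℂ) (i : Fin n) :
    siteOp n B i = tOp n (fun l => if l = i then B else 1) := by
  ext x y
  unfold siteOp tOp
  rw [← Finset.mul_prod_erase Finset.univ
      (fun l => (if l = i then B else 1) (x l) (y l)) (Finset.mem_univ i)]
  simp only [if_pos rfl]
  congr 1
  refine Finset.prod_congr rfl fun l hl => ?_
  rw [if_neg (Finset.ne_of_mem_erase hl), Matrix.one_apply]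

lemma tOp_one {n : ℕ} : tOp n (fun _ => 1) = 1 := by
  ext x y
  show (∏ l, (1 : Matrix (Fin 2) (Fin 2) ℂ) (x l) (y l)) = _
  simp only [Matrix.one_apply]
  rw [Finset.prod_boole]
  simp only [Finset.mem_univ, forall_true_left, show (∀ l, x l = y l) ↔ x = y from funext_iff.symm]


noncomputable def σv : Fin 3 → Matrix (Fin 2) (Fin 2) ℂ := ![pauliX, pauliY, pauliZ]

lemma σv_sq (w : Fin 3) : σv w * σv w = 1 := by
  fin_cases w <;>
    simp [σv, pauliX, pauliY, pauliZ, Matrix.mul_fin_two, Matrix.one_fin_two,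
      Complex.I_mul_I] <;> ring_nf <;> simp [Complex.I_sq]

lemma pair_identity (a b c d : Fin 2) :
    (2 : ℂ) * ((if a = d then 1 else 0) * (if b = c then 1 else 0)) =
      (if a = c then 1 else 0) * (if b = d then 1 else 0) +
      (σv 0 a c * σv 0 b d + σv 1 a c * σv 1 b d + σv 2 a c * σv 2 b d) := by
  fin_cases a <;> fin_cases b <;> fin_cases c <;> fin_cases d <;>
    simp [σv, pauliX, pauliY, pauliZ] <;> ring_nf <;> simp [Complex.I_sq] <;> ring

lemma siteOp_mul_siteOp_ne {n : ℕ} (B C : Matrix (Fin 2) (Fin 2) ℂ) {r s : Fin n}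
    (h : r ≠ s) :
    siteOp n B r * siteOp n C s =
      tOp n (fun l => if l = r then B else if l = s then C else 1) := by
  rw [siteOp_eq_tOp, siteOp_eq_tOp, tOp_mul]
  have hf : (fun l => (if l = r then B else 1) * if l = s then C else 1)
      = fun l : Fin n => if l = r then B else if l = s then C else 1 := by
    funext l
    by_cases hr : l = r
    · subst hr; rw [if_pos rfl, if_pos rfl, if_neg h, mul_one]
    · rw [if_neg hr, if_neg hr, one_mul]
  rw [hf]

lemma siteOp_sq {n : ℕ} (w : Fin 3) (i : Fin n) :
    siteOp n (σv w) i * siteOp n (σv w) i = 1 := by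
  rw [siteOp_eq_tOp, tOp_mul, ← tOp_one]
  have hf : (fun l => (if l = i then σv w else 1) * if l = i then σv w else 1)
      = fun _ : Fin n => (1 : Matrix (Fin 2) (Fin 2) ℂ) := by
    funext l
    by_cases hl : l = i
    · subst hl; rw [if_pos rfl, σv_sq]
    · rw [if_neg hl, one_mul]
  rw [hf]

lemma siteOp_comm {n : ℕ} (B C : Matrix (Fin 2) (Fin 2) ℂ) {r s : Fin n} (h : r ≠ s) :
    siteOp n B r * siteOp n C s = siteOp n C s * siteOp n B r := by
  rw [siteOp_mul_siteOp_ne _ _ h, siteOp_mul_siteOp_ne _ _ h.symm]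
  have hf : (fun l : Fin n => if l = r then B else if l = s then C else 1)
      = fun l : Fin n => if l = s then C else if l = r then B else 1 := by
    funext l
    by_cases hr : l = r
    · subst hr; rw [if_pos rfl, if_neg h, if_pos rfl]
    · by_cases hs : l = s <;> simp [hr, hs, h.symm]
  rw [hf]

lemma swap_pair {n : ℕ} {r s : Fin n} (h : r ≠ s) :
    (1 : Matrix (Fin n → Fin 2) (Fin n → Fin 2) ℂ) +
      ∑ w : Fin 3, siteOp n (σv w) r * siteOp n (σv w) s
      = (2 : ℂ) • permOp n (Equiv.swap r s) := by
  ext x y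
  have hsplit : ∀ F : Fin n → ℂ,
      ∏ l, F l = F r * (F s * ∏ l ∈ (Finset.univ.erase r).erase s, F l) := by
    intro F
    rw [← Finset.mul_prod_erase Finset.univ F (Finset.mem_univ r),
        ← Finset.mul_prod_erase (Finset.univ.erase r) F
          (Finset.mem_erase.mpr ⟨h.symm, Finset.mem_univ s⟩)]
  set D : ℂ := ∏ l ∈ (Finset.univ.erase r).erase s, (if x l = y l then (1:ℂ) else 0) with hD
  have h1 : (1 : Matrix (Fin n → Fin 2) (Fin n → Fin 2) ℂ) x y
      = (if x r = y r then 1 else 0) * ((if x s = y s then 1 else 0) * D) := by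
    have he : (if x = y then (1:ℂ) else 0)
        = ∏ l, (if x l = y l then (1:ℂ) else 0) := by
      rw [Fintype.prod_boole]
      simp only [show (∀ l, x l = y l) ↔ x = y from funext_iff.symm]
    rw [Matrix.one_apply, he, hsplit]
  have hperm : permOp n (Equiv.swap r s) x y
      = (if x s = y r then 1 else 0) * ((if x r = y s then 1 else 0) * D) := by
    show (if x ∘ (Equiv.swap r s) = y then (1:ℂ) else 0) = _
    have he : (if x ∘ (Equiv.swap r s) = y then (1:ℂ) else 0)
        = ∏ l, (if x ((Equiv.swap r s) l) = y l then (1:ℂ) else 0) := by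
      rw [Fintype.prod_boole]
      simp only [show (∀ l, x ((Equiv.swap r s) l) = y l) ↔ x ∘ (Equiv.swap r s) = y from
        ⟨fun hl => funext hl, fun hxy l => congrFun hxy l⟩]
    rw [he, hsplit, Equiv.swap_apply_left, Equiv.swap_apply_right]
    congr 2
    refine Finset.prod_congr rfl fun l hl => ?_
    have hls : l ≠ s := (Finset.mem_erase.mp hl).1
    have hlr : l ≠ r := (Finset.mem_erase.mp (Finset.mem_erase.mp hl).2).1
    rw [Equiv.swap_apply_of_ne_of_ne hlr hls]
  have hw : ∀ w : Fin 3, (siteOp n (σv w) r * siteOp n (σv w) s) x y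
      = σv w (x r) (y r) * (σv w (x s) (y s) * D) := by
    intro w
    rw [siteOp_mul_siteOp_ne _ _ h]
    show (∏ l, (if l = r then σv w else if l = s then σv w else 1) (x l) (y l)) = _
    rw [hsplit, if_pos rfl, if_neg h.symm, if_pos rfl]
    congr 2
    refine Finset.prod_congr rfl fun l hl => ?_
    have hls : l ≠ s := (Finset.mem_erase.mp hl).1
    have hlr : l ≠ r := (Finset.mem_erase.mp (Finset.mem_erase.mp hl).2).1
    rw [if_neg hlr, if_neg hls, Matrix.one_apply]
  simp only [Matrix.add_apply, Matrix.sum_apply, Matrix.smul_apply, smul_eq_mul]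
  rw [Fin.sum_univ_three, h1, hperm, hw 0, hw 1, hw 2]
  linear_combination (-D) * pair_identity (x r) (x s) (y r) (y s)

/-- **Sum of all SWAP operators in terms of the total angular momentum.** On `n ≥ 2`
qubits, `∑_{r<s} SWAP_{r,s} = J² + ((n² - 4n)/4)·1`. -/
theorem sum_swaps_eq_Jsq
    (n : ℕ) (hn : 2 ≤ n) :
    (∑ p ∈ Finset.univ.filter (fun p : Fin n × Fin n => p.1 < p.2),
        permOp n (Equiv.swap p.1 p.2))
      = Jsq n + (((n : ℂ) ^ 2 - 4 * n) / 4) •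
          (1 : Matrix (Fin n → Fin 2) (Fin n → Fin 2) ℂ) := by
  classical
  set lt := Finset.univ.filter (fun p : Fin n × Fin n => p.1 < p.2) with hlt
  set gt := Finset.univ.filter (fun p : Fin n × Fin n => p.2 < p.1) with hgt
  set G : Fin n × Fin n → Matrix (Fin n → Fin 2) (Fin n → Fin 2) ℂ :=
    fun p => ∑ w : Fin 3, siteOp n (σv w) p.1 * siteOp n (σv w) p.2 with hG
  set L := ∑ p ∈ lt, permOp n (Equiv.swap p.1 p.2) with hL
  have hpair : ∀ p : Fin n × Fin n, p.1 ≠ p.2 →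
      G p = (2:ℂ) • permOp n (Equiv.swap p.1 p.2) - 1 :=
    fun p hp => eq_sub_of_add_eq' (swap_pair hp)
  have hJop : ∀ B : Matrix (Fin 2) (Fin 2) ℂ,
      Jop n B * Jop n B
        = (4:ℂ)⁻¹ • ∑ i, ∑ j, siteOp n B i * siteOp n B j := by
    intro B
    rw [Jop, Matrix.smul_mul, Matrix.mul_smul, smul_smul, Finset.sum_mul_sum]
    norm_num
  have hJ4 : Jsq n = (4:ℂ)⁻¹ • ∑ p ∈ Finset.univ ×ˢ Finset.univ, G p := by
    rw [Jsq, hJop, hJop, hJop, ← smul_add, ← smul_add]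
    congr 1
    rw [Finset.sum_product]
    simp only [hG, Fin.sum_univ_three, Finset.sum_add_distrib]
    simp [σv]
  have hsplit : ∑ p ∈ Finset.univ ×ˢ Finset.univ, G p
      = ∑ p ∈ (Finset.univ : Finset (Fin n)).diag, G p
        + ∑ p ∈ (Finset.univ : Finset (Fin n)).offDiag, G p := by
    rw [← Finset.diag_union_offDiag, Finset.sum_union (Finset.disjoint_diag_offDiag _)]
  have hdiag : ∑ p ∈ (Finset.univ : Finset (Fin n)).diag, G p
      = ((3 * n : ℕ) : ℂ) • 1 := by
    rw [Finset.sum_diag]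
    have h1 : ∀ i : Fin n, G (i, i) = ((3:ℕ) : ℂ) • 1 := by
      intro i
      rw [hG]
      simp only
      rw [Finset.sum_congr rfl fun w _ => siteOp_sq w i, Finset.sum_const,
        ← Nat.cast_smul_eq_nsmul ℂ]
      norm_num
    rw [Finset.sum_congr rfl fun i _ => h1 i, Finset.sum_const]
    rw [← Nat.cast_smul_eq_nsmul ℂ (Finset.univ : Finset (Fin n)).card, smul_smul]
    rw [← Nat.cast_mul]
    simp [mul_comm]
  have hunion : (Finset.univ : Finset (Fin n)).offDiag = lt ∪ gt := by
    ext p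
    simp only [Finset.mem_offDiag, Finset.mem_union, hlt, hgt, Finset.mem_filter,
      Finset.mem_univ, true_and]
    exact ne_iff_lt_or_gt
  have hdisj : Disjoint lt gt := by
    rw [Finset.disjoint_left]
    intro p hp hp'
    simp only [hlt, Finset.mem_filter] at hp
    simp only [hgt, Finset.mem_filter] at hp'
    exact absurd hp'.2 (not_lt.mpr hp.2.le)
  have hGsymm : ∀ p : Fin n × Fin n, p.1 ≠ p.2 → G p.swap = G p := by
    intro p hp
    rw [hG]
    exact Finset.sum_congr rfl fun w _ => siteOp_comm _ _ hp.symm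
  have hgtsum : ∑ p ∈ gt, G p = ∑ p ∈ lt, G p := by
    refine Finset.sum_nbij' (i := Prod.swap) (j := Prod.swap) ?_ ?_ ?_ ?_ ?_
    · intro p hp
      simp only [hgt, Finset.mem_filter] at hp
      simp [hlt, hp.2]
    · intro p hp
      simp only [hlt, Finset.mem_filter] at hp
      simp [hgt, hp.2]
    · intro p _; simp
    · intro p _; simp
    · intro p hp
      simp only [hgt, Finset.mem_filter] at hp
      exact (hGsymm p (ne_of_gt hp.2)).symm
  have hcc : lt.card = gt.card := by
    refine Finset.card_bij' (fun p _ => Prod.swap p) (fun p _ => Prod.swap p) ?_ ?_ ?_ ?_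
    · intro p hp
      simp only [hlt, Finset.mem_filter] at hp
      simp [hgt, hp.2]
    · intro p hp
      simp only [hgt, Finset.mem_filter] at hp
      simp [hlt, hp.2]
    · intro p _; simp
    · intro p _; simp
  have hcard : 2 * lt.card = n * n - n := by
    have hsum : lt.card + gt.card = (Finset.univ : Finset (Fin n)).offDiag.card := by
      rw [hunion, Finset.card_union_of_disjoint hdisj]
    rw [Finset.offDiag_card, Finset.card_univ, Fintype.card_fin] at hsum
    omega
  have hNc : (lt.card : ℂ) = ((n:ℂ) * n - n) / 2 := by
    have hle : n ≤ n * n := Nat.le_mul_of_pos_left n (by omega)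
    have h2 : ((2 * lt.card : ℕ) : ℂ) = ((n * n - n : ℕ) : ℂ) := by rw [hcard]
    rw [Nat.cast_sub hle] at h2
    push_cast at h2
    linear_combination h2 / 2
  have hltG : ∑ p ∈ lt, G p = (2:ℂ) • L - (lt.card : ℂ) • 1 := by
    rw [Finset.sum_congr rfl (fun p hp => hpair p (by
      simp only [hlt, Finset.mem_filter] at hp
      exact ne_of_lt hp.2))]
    rw [Finset.sum_sub_distrib, ← Finset.smul_sum, hL, Finset.sum_const,
      ← Nat.cast_smul_eq_nsmul ℂ]
  have hoff : ∑ p ∈ (Finset.univ : Finset (Fin n)).offDiag, G p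
      = (∑ p ∈ lt, G p) + ∑ p ∈ lt, G p := by
    rw [hunion, Finset.sum_union hdisj, hgtsum]
  rw [hJ4, hsplit, hdiag, hoff, hltG, hNc]
  push_cast
  module
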